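/- Let X be a finite nonempty set, let τ > 0, and let Z and Z' be neighboring finite multisets of vectors z : X → ℝ with |Z| ≥ 3 and |Z'| ≥ 3. Then for every x ∈ X, exp(−γ(Z, x)) ≤ softmax_τ(med(Z))(x) / softmax_τ(med(Z'))(x) ≤ exp(γ(Z, x)). -/

import Mathlib

/-!
Inserting one element into a sorted list moves each entry by at most one position, so the
median of `Z'` lies, coordinatewise, between the left and right medians of `Z`. The ratio of
the two softmax values is `exp ((z̄_x - z̄'_x) / τ)` times the ratio of the partition functions,
which is monotone in each coordinate of `z̄'`; the extreme choices give `α(Z, x)` and `β(Z, x)`.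
-/

open Real

/-- The left-median of a finite multiset of reals (see context):
    for sorted values `s_1 ≤ … ≤ s_N`, this is `s_k` when `N = 2k` or `N = 2k+1` (`N ≥ 2`),
    and `s_1` when `N = 1`. (0-indexed: `N/2 - 1`.) -/
noncomputable def leftmed (S : Multiset ℝ) : ℝ :=
  if S.card = 1 then (S.sort (· ≤ ·)).getD 0 0
  else (S.sort (· ≤ ·)).getD (S.card / 2 - 1) 0

/-- The right-median: `s_{k+1}` when `N = 2k`, `s_{k+2}` when `N = 2k+1 ≥ 3`, `s_1` when `N = 1`. -/
noncomputable def rightmed (S : Multiset ℝ) : ℝ :=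
  if S.card = 1 then (S.sort (· ≤ ·)).getD 0 0
  else if S.card % 2 = 0 then (S.sort (· ≤ ·)).getD (S.card / 2) 0
  else (S.sort (· ≤ ·)).getD (S.card / 2 + 1) 0

/-- The median: `(s_k + s_{k+1})/2` when `N = 2k`, `s_{k+1}` when `N = 2k+1`. -/
noncomputable def med (S : Multiset ℝ) : ℝ :=
  if S.card = 1 then (S.sort (· ≤ ·)).getD 0 0
  else if S.card % 2 = 0 then
    ((S.sort (· ≤ ·)).getD (S.card / 2 - 1) 0 + (S.sort (· ≤ ·)).getD (S.card / 2) 0) / 2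
  else (S.sort (· ≤ ·)).getD (S.card / 2) 0
/-- Two finite multisets are neighbors if one is obtained from the other by adding a single
    element (equivalently their symmetric difference has size 1). -/
def Neighbors {α : Type*} (Z Z' : Multiset α) : Prop :=
  (∃ a, Z' = a ::ₘ Z) ∨ (∃ a, Z = a ::ₘ Z')

/-- The multiset `Z^{(x)}` of `x`-th components of a multiset of vectors. -/
def compAt {X : Type*} (Z : Multiset (X → ℝ)) (x : X) : Multiset ℝ :=
  Z.map (fun z => z x)

/-- Componentwise left-median of a multiset of vectors. -/
noncomputable def leftmedVec {X : Type*} (Z : Multiset (X → ℝ)) : X → ℝ :=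
  fun x => leftmed (compAt Z x)

/-- Componentwise median of a multiset of vectors. -/
noncomputable def medVec {X : Type*} (Z : Multiset (X → ℝ)) : X → ℝ :=
  fun x => med (compAt Z x)

/-- Componentwise right-median of a multiset of vectors. -/
noncomputable def rightmedVec {X : Type*} (Z : Multiset (X → ℝ)) : X → ℝ :=
  fun x => rightmed (compAt Z x)
/-- `softmax_τ(z)(x) = exp(z_x/τ) / Σ_y exp(z_y/τ)`. -/
noncomputable def softmax {X : Type*} [Fintype X] (τ : ℝ) (z : X → ℝ) (x : X) : ℝ :=
  Real.exp (z x / τ) / ∑ y, Real.exp (z y / τ)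
/-- `α(Z, x) = exp((z̄_x − z̄^R_x)/τ) · (Σ_y exp(z̄^L_y/τ)) / (Σ_y exp(z̄_y/τ))`
    where `z̄ = med(Z)`, `z̄^L = leftmed(Z)`, `z̄^R = rightmed(Z)`. -/
noncomputable def alpha {X : Type*} [Fintype X] (τ : ℝ) (Z : Multiset (X → ℝ)) (x : X) : ℝ :=
  Real.exp ((medVec Z x - rightmedVec Z x) / τ) *
    (∑ y, Real.exp (leftmedVec Z y / τ)) / (∑ y, Real.exp (medVec Z y / τ))

/-- `β(Z, x) = exp((z̄_x − z̄^L_x)/τ) · (Σ_y exp(z̄^R_y/τ)) / (Σ_y exp(z̄_y/τ))`. -/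
noncomputable def beta {X : Type*} [Fintype X] (τ : ℝ) (Z : Multiset (X → ℝ)) (x : X) : ℝ :=
  Real.exp ((medVec Z x - leftmedVec Z x) / τ) *
    (∑ y, Real.exp (rightmedVec Z y / τ)) / (∑ y, Real.exp (medVec Z y / τ))

/-- Per-token privacy cost `γ(Z, x) = max(log(1/α(Z, x)), log β(Z, x))`. -/
noncomputable def gamma {X : Type*} [Fintype X] (τ : ℝ) (Z : Multiset (X → ℝ)) (x : X) : ℝ :=
  max (Real.log (1 / alpha τ Z x)) (Real.log (beta τ Z x))

theorem List.Sublist.exists_getElem_eq_of_length_eq_succ {α : Type*} {l m : List α}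
    (h : l.Sublist m) (hlen : m.length = l.length + 1) {i : ℕ} (hi : i < l.length) :
    ∃ j, ∃ hj : j < m.length, (j = i ∨ j = i + 1) ∧ m[j] = l[i] := by
  obtain ⟨f, hf⟩ := List.sublist_iff_exists_orderEmbedding_getElem?_eq.mp h
  have hf_lt : ∀ k < l.length, f k < m.length := fun k hk => by
    simpa [hk] using congrArg Option.isSome (hf k)
  -- The index embedding `f` is strictly increasing and `f (l.length - 1) ≤ l.length`,
  -- which squeezes `f i` between `i` and `i + 1`.
  have hlast := f.strictMono.add_le_nat (l.length - 1 - i) i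
  rw [show l.length - 1 - i + i = l.length - 1 by omega] at hlast
  have hlast_lt := hf_lt (l.length - 1) (by omega)
  have hi_le : i ≤ f i := f.strictMono.id_le i
  refine ⟨f i, hf_lt i hi, by omega, ?_⟩
  have := hf i
  rw [List.getElem?_eq_getElem hi, List.getElem?_eq_getElem (hf_lt i hi)] at this
  exact (Option.some.inj this).symm

/-- Indexed from `0`, with the junk value `0` for `i ≥ card S`. -/
noncomputable def orderStat (S : Multiset ℝ) (i : ℕ) : ℝ :=
  (S.sort (· ≤ ·)).getD i 0

namespace orderStat

theorem mono {S : Multiset ℝ} {i j : ℕ} (hij : i ≤ j) (hj : j < S.card) :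
    orderStat S i ≤ orderStat S j := by
  have hj' : j < (S.sort (· ≤ ·)).length := by rwa [Multiset.length_sort]
  rw [orderStat, orderStat, List.getD_eq_getElem _ _ hj', List.getD_eq_getElem _ _ (by omega)]
  exact (S.pairwise_sort _).sortedLE.getElem_le_getElem_of_le hij

theorem exists_cons_eq (a : ℝ) {S : Multiset ℝ} {i : ℕ} (hi : i < S.card) :
    ∃ j, (j = i ∨ j = i + 1) ∧ orderStat (a ::ₘ S) j = orderStat S i := by
  have hsub : (S.sort (· ≤ ·)).Sublist ((a ::ₘ S).sort (· ≤ ·)) := by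
    refine List.sublist_of_subperm_of_pairwise ?_ (S.pairwise_sort _) ((a ::ₘ S).pairwise_sort _)
    rw [← Multiset.coe_le, Multiset.sort_eq, Multiset.sort_eq]
    exact Multiset.le_cons_self _ _
  have hi' : i < (S.sort (· ≤ ·)).length := by rwa [Multiset.length_sort]
  obtain ⟨j, hj, hji, heq⟩ := hsub.exists_getElem_eq_of_length_eq_succ
    (by simp only [Multiset.length_sort, Multiset.card_cons]) hi'
  refine ⟨j, hji, ?_⟩
  rw [orderStat, orderStat, List.getD_eq_getElem _ _ hj, List.getD_eq_getElem _ _ hi', heq]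

theorem cons_le (a : ℝ) {S : Multiset ℝ} {i : ℕ} (hi : i < S.card) :
    orderStat (a ::ₘ S) i ≤ orderStat S i := by
  obtain ⟨j, hji, heq⟩ := exists_cons_eq a hi
  rw [← heq]
  exact mono (by omega) (by rw [Multiset.card_cons]; omega)

theorem le_cons_succ (a : ℝ) {S : Multiset ℝ} {i : ℕ} (hi : i < S.card) :
    orderStat S i ≤ orderStat (a ::ₘ S) (i + 1) := by
  obtain ⟨j, hji, heq⟩ := exists_cons_eq a hi
  rw [← heq]
  exact mono (by omega) (by rw [Multiset.card_cons]; omega)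

end orderStat

section Median

variable {S : Multiset ℝ}

theorem leftmed_eq_orderStat (hS : S.card ≠ 1) : leftmed S = orderStat S (S.card / 2 - 1) := by
  rw [leftmed, if_neg hS, orderStat]

theorem rightmed_eq_orderStat (hS : S.card ≠ 1) :
    rightmed S = orderStat S ((S.card + 1) / 2) := by
  rw [rightmed, if_neg hS, orderStat]
  split_ifs with hpar
  · rw [show (S.card + 1) / 2 = S.card / 2 by omega]
  · rw [show (S.card + 1) / 2 = S.card / 2 + 1 by omega]

theorem orderStat_le_med : orderStat S ((S.card - 1) / 2) ≤ med S := by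
  rw [med]
  split_ifs with h1 hpar
  · rw [orderStat, h1]
  · rcases Nat.eq_zero_or_pos S.card with h0 | hpos
    · simp [orderStat, h0]
    · have := orderStat.mono (S := S) (i := S.card / 2 - 1) (j := S.card / 2) (by omega) (by omega)
      rw [show (S.card - 1) / 2 = S.card / 2 - 1 by omega]
      simp only [orderStat] at this ⊢
      linarith
  · rw [orderStat, show (S.card - 1) / 2 = S.card / 2 by omega]

theorem med_le_orderStat : med S ≤ orderStat S (S.card / 2) := by
  rw [med]
  split_ifs with h1 hpar
  · rw [orderStat, h1]
  · rcases Nat.eq_zero_or_pos S.card with h0 | hpos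
    · simp [orderStat, h0]
    · have := orderStat.mono (S := S) (i := S.card / 2 - 1) (j := S.card / 2) (by omega) (by omega)
      simp only [orderStat] at this ⊢
      linarith
  · rfl

theorem leftmed_le_med_cons (a : ℝ) (hS : 2 ≤ S.card) : leftmed S ≤ med (a ::ₘ S) := by
  have hcard := Multiset.card_cons a S
  calc leftmed S = orderStat S (S.card / 2 - 1) := leftmed_eq_orderStat (by omega)
    _ ≤ orderStat (a ::ₘ S) (S.card / 2 - 1 + 1) := orderStat.le_cons_succ a (by omega)
    _ = orderStat (a ::ₘ S) (((a ::ₘ S).card - 1) / 2) := by congr 1; omega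
    _ ≤ med (a ::ₘ S) := orderStat_le_med

theorem med_cons_le_rightmed (a : ℝ) (hS : 2 ≤ S.card) : med (a ::ₘ S) ≤ rightmed S := by
  have hcard := Multiset.card_cons a S
  calc med (a ::ₘ S) ≤ orderStat (a ::ₘ S) ((a ::ₘ S).card / 2) := med_le_orderStat
    _ = orderStat (a ::ₘ S) ((S.card + 1) / 2) := by rw [hcard]
    _ ≤ orderStat S ((S.card + 1) / 2) := orderStat.cons_le a (by omega)
    _ = rightmed S := (rightmed_eq_orderStat (by omega)).symm

theorem leftmed_cons_le_med (a : ℝ) (hS : 0 < S.card) : leftmed (a ::ₘ S) ≤ med S := by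
  have hcard := Multiset.card_cons a S
  calc leftmed (a ::ₘ S) = orderStat (a ::ₘ S) ((a ::ₘ S).card / 2 - 1) :=
        leftmed_eq_orderStat (by omega)
    _ = orderStat (a ::ₘ S) ((S.card - 1) / 2) := by rw [hcard]; congr 1; omega
    _ ≤ orderStat S ((S.card - 1) / 2) := orderStat.cons_le a (by omega)
    _ ≤ med S := orderStat_le_med

theorem med_le_rightmed_cons (a : ℝ) (hS : 0 < S.card) : med S ≤ rightmed (a ::ₘ S) := by
  have hcard := Multiset.card_cons a S
  calc med S ≤ orderStat S (S.card / 2) := med_le_orderStat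
    _ ≤ orderStat (a ::ₘ S) (S.card / 2 + 1) := orderStat.le_cons_succ a (by omega)
    _ = orderStat (a ::ₘ S) (((a ::ₘ S).card + 1) / 2) := by rw [hcard]; congr 1; omega
    _ = rightmed (a ::ₘ S) := (rightmed_eq_orderStat (by omega)).symm

end Median

theorem Neighbors.map {α β : Type*} {Z Z' : Multiset α} (h : Neighbors Z Z') (f : α → β) :
    Neighbors (Z.map f) (Z'.map f) := by
  rcases h with ⟨a, rfl⟩ | ⟨a, rfl⟩
  · exact Or.inl ⟨f a, Multiset.map_cons f a Z⟩
  · exact Or.inr ⟨f a, Multiset.map_cons f a Z'⟩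

theorem Neighbors.med_mem_Icc {S S' : Multiset ℝ} (h : Neighbors S S') (hS : 2 ≤ S.card) :
    med S' ∈ Set.Icc (leftmed S) (rightmed S) := by
  rcases h with ⟨a, rfl⟩ | ⟨a, rfl⟩
  · exact ⟨leftmed_le_med_cons a hS, med_cons_le_rightmed a hS⟩
  · have hS' : 0 < S'.card := by rw [Multiset.card_cons] at hS; omega
    exact ⟨leftmed_cons_le_med a hS', med_le_rightmed_cons a hS'⟩

section Softmax

variable {X : Type*} [Fintype X] {τ : ℝ}

theorem sum_exp_div_pos (z : X → ℝ) (x : X) : 0 < ∑ y, exp (z y / τ) :=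
  (exp_pos _).trans_le (Finset.single_le_sum (fun y _ => (exp_pos (z y / τ)).le) (Finset.mem_univ x))

theorem softmax_div_softmax (z w : X → ℝ) (x : X) :
    softmax τ z x / softmax τ w x =
      exp ((z x - w x) / τ) * (∑ y, exp (w y / τ)) / ∑ y, exp (z y / τ) := by
  have := (sum_exp_div_pos (τ := τ) z x).ne'
  have := (sum_exp_div_pos (τ := τ) w x).ne'
  rw [softmax, softmax, sub_div, exp_sub]
  field_simp

theorem softmax_div_softmax_le (hτ : 0 < τ) {z w l r : X → ℝ} (hl : l ≤ w) (hr : w ≤ r) (x : X) :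
    softmax τ z x / softmax τ w x ≤
      exp ((z x - l x) / τ) * (∑ y, exp (r y / τ)) / ∑ y, exp (z y / τ) := by
  rw [softmax_div_softmax]
  gcongr
  · exact hl x
  · exact hr _

theorem le_softmax_div_softmax (hτ : 0 < τ) {z w l r : X → ℝ} (hl : l ≤ w) (hr : w ≤ r) (x : X) :
    exp ((z x - r x) / τ) * (∑ y, exp (l y / τ)) / ∑ y, exp (z y / τ) ≤
      softmax τ z x / softmax τ w x := by
  rw [softmax_div_softmax]
  gcongr
  · exact hr x
  · exact hl _

theorem alpha_pos (τ : ℝ) (Z : Multiset (X → ℝ)) (x : X) : 0 < alpha τ Z x :=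
  div_pos (mul_pos (exp_pos _) (sum_exp_div_pos _ x)) (sum_exp_div_pos _ x)

theorem beta_pos (τ : ℝ) (Z : Multiset (X → ℝ)) (x : X) : 0 < beta τ Z x :=
  div_pos (mul_pos (exp_pos _) (sum_exp_div_pos _ x)) (sum_exp_div_pos _ x)

end Softmax

theorem Real.exp_neg_max_log_one_div_le {a : ℝ} (ha : 0 < a) (c : ℝ) :
    exp (-max (log (1 / a)) c) ≤ a := by
  rw [← exp_log ha, exp_le_exp, one_div, log_inv, exp_log ha]
  linarith [le_max_left (-log a) c]

theorem Real.le_exp_max_log {b : ℝ} (hb : 0 < b) (c : ℝ) : b ≤ exp (max c (log b)) :=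
  (exp_log hb).symm.le.trans (exp_le_exp.mpr (le_max_right _ _))

theorem softmax_med_ratio_bounded_by_gamma_general
    {X : Type*} [Fintype X] (τ : ℝ) (hτ : 0 < τ)
    (Z Z' : Multiset (X → ℝ)) (hZZ' : Neighbors Z Z')
    (hZ : 3 ≤ Z.card) :
    ∀ x : X,
      Real.exp (-(gamma τ Z x)) ≤ softmax τ (medVec Z) x / softmax τ (medVec Z') x ∧
      softmax τ (medVec Z) x / softmax τ (medVec Z') x ≤ Real.exp (gamma τ Z x) := by
  intro x
  have hmed : ∀ y, medVec Z' y ∈ Set.Icc (leftmedVec Z y) (rightmedVec Z y) := fun y =>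
    (hZZ'.map fun z => z y).med_mem_Icc (by rw [Multiset.card_map]; omega)
  have hlo : alpha τ Z x ≤ softmax τ (medVec Z) x / softmax τ (medVec Z') x :=
    le_softmax_div_softmax hτ (fun y => (hmed y).1) (fun y => (hmed y).2) x
  have hhi : softmax τ (medVec Z) x / softmax τ (medVec Z') x ≤ beta τ Z x :=
    softmax_div_softmax_le hτ (fun y => (hmed y).1) (fun y => (hmed y).2) x
  exact ⟨(exp_neg_max_log_one_div_le (alpha_pos τ Z x) _).trans hlo,
    hhi.trans (le_exp_max_log (beta_pos τ Z x) _)⟩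

/-- For neighboring finite multisets `Z, Z'` of vectors in `ℝ^X` with
    `|Z| ≥ 3` and `|Z'| ≥ 3`: for every `x ∈ X`,
    `exp(−γ(Z, x)) ≤ softmax_τ(med(Z))(x) / softmax_τ(med(Z'))(x) ≤ exp(γ(Z, x))`. -/
theorem softmax_med_ratio_bounded_by_gamma
    {X : Type*} [Fintype X] [Nonempty X] (τ : ℝ) (hτ : 0 < τ)
    (Z Z' : Multiset (X → ℝ)) (hZZ' : Neighbors Z Z')
    (hZ : 3 ≤ Z.card) (hZ' : 3 ≤ Z'.card) :
    ∀ x : X,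
      Real.exp (-(gamma τ Z x)) ≤ softmax τ (medVec Z) x / softmax τ (medVec Z') x ∧
      softmax τ (medVec Z) x / softmax τ (medVec Z') x ≤ Real.exp (gamma τ Z x) :=
  softmax_med_ratio_bounded_by_gamma_general τ hτ Z Z' hZZ' hZ
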